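/- Let A be a finite idempotent algebra, a,b ∈ A, B = Sg{a,b}, and θ a congruence of B. Let h be a ternary term operation of A such that h(h(x,y,y), y, y) = h(x,y,y) for all x,y ∈ A, and such that h(x,y,y) θ x and h(y,y,x) θ x for all x,y ∈ B. Then there exist b′ ∈ b^θ and a ternary term operation h′ of A such that h′(b′,a,a) = h′(a,a,b′) = b′. -/

import Mathlib

/-! With `φ z = h (h a a z) a a`, the two affine laws give `z θ φ z` on `Sg {a, b}`, so all
`φ`-iterates of `b` stay in `b^θ`. By finiteness some iterate `b' = φ^[n+1] b` is `φ`-periodic,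
say `φ^[p+1] b' = b'`. The term `h' x y z = h (h x y (φ_y^[p] z)) y y`, where
`φ_y w = h (h y y w) y y`, satisfies `h' a a z = φ^[p+1] z`; and since idempotence makes `φ`
fix `a`, `h' x a a = h x a a`, which fixes `b'` because `x ↦ h x a a` is a retraction onto its
image by the law `h (h x y y) y y = h x y y`. -/

namespace UA

/-- Terms over a signature `(ι, ar)` with `n` variables. -/
inductive Term (ι : Type) (ar : ι → ℕ) (n : ℕ) : Type where
  | var : Fin n → Term ι ar n
  | app : (i : ι) → (Fin (ar i) → Term ι ar n) → Term ι ar n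

/-- Evaluation of a term in an algebra with operations `ops`. -/
def Term.eval {ι : Type} {ar : ι → ℕ} {A : Type} (ops : ∀ i : ι, (Fin (ar i) → A) → A)
    {n : ℕ} : Term ι ar n → (Fin n → A) → A
  | .var j, x => x j
  | .app i ts, x => ops i fun k => Term.eval ops (ts k) x

variable {ι : Type} {ar : ι → ℕ} {A : Type}

/-- An algebra is idempotent if every basic operation is. -/
def Idempotent (ops : ∀ i : ι, (Fin (ar i) → A) → A) : Prop :=
  ∀ (i : ι) (x : A), ops i (fun _ => x) = x

/-- A subuniverse: a subset closed under all basic operations. -/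
def IsSubuniverse (ops : ∀ i : ι, (Fin (ar i) → A) → A) (S : Set A) : Prop :=
  ∀ (i : ι) (xs : Fin (ar i) → A), (∀ k, xs k ∈ S) → ops i xs ∈ S

/-- The subuniverse generated by `X`. -/
def Sg (ops : ∀ i : ι, (Fin (ar i) → A) → A) (X : Set A) : Set A :=
  ⋂₀ {S | IsSubuniverse ops S ∧ X ⊆ S}

/-- A tolerance: a reflexive symmetric compatible binary relation. -/
def IsTolerance (ops : ∀ i : ι, (Fin (ar i) → A) → A) (τ : A → A → Prop) : Prop :=
  (∀ x, τ x x) ∧ (∀ x y, τ x y → τ y x) ∧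
  ∀ (i : ι) (xs ys : Fin (ar i) → A), (∀ k, τ (xs k) (ys k)) → τ (ops i xs) (ops i ys)

/-- A congruence: a compatible equivalence relation. -/
def IsCongruence (ops : ∀ i : ι, (Fin (ar i) → A) → A) (θ : A → A → Prop) : Prop :=
  Equivalence θ ∧
  ∀ (i : ι) (xs ys : Fin (ar i) → A), (∀ k, θ (xs k) (ys k)) → θ (ops i xs) (ops i ys)

/-- A congruence of the subalgebra with universe `B`, viewed as a partial
equivalence relation on the big algebra whose domain is exactly `B` and which is
compatible with all operations. -/
def IsCongruenceOn (ops : ∀ i : ι, (Fin (ar i) → A) → A) (B : Set A)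
    (θ : A → A → Prop) : Prop :=
  (∀ x y, θ x y → x ∈ B ∧ y ∈ B) ∧
  (∀ x ∈ B, θ x x) ∧
  (∀ x y, θ x y → θ y x) ∧
  (∀ x y z, θ x y → θ y z → θ x z) ∧
  ∀ (i : ι) (xs ys : Fin (ar i) → A), (∀ k, θ (xs k) (ys k)) → θ (ops i xs) (ops i ys)

/-- `f` is a binary term operation of the algebra. -/
def IsTermOp2 (ops : ∀ i : ι, (Fin (ar i) → A) → A) (f : A → A → A) : Prop :=
  ∃ t : Term ι ar 2, ∀ x y, f x y = t.eval ops ![x, y]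

/-- `g` is a ternary term operation of the algebra. -/
def IsTermOp3 (ops : ∀ i : ι, (Fin (ar i) → A) → A) (g : A → A → A → A) : Prop :=
  ∃ t : Term ι ar 3, ∀ x y z, g x y z = t.eval ops ![x, y, z]

/-- Connectivity of `a` and `b` in the hypergraph `H(A)` whose hyperedges are the
nonempty proper subuniverses: a chain of hyperedges with consecutive ones
intersecting, the first containing `a`, the last containing `b`. -/
def HConnected (ops : ∀ i : ι, (Fin (ar i) → A) → A) (a b : A) : Prop :=
  ∃ L : List (Set A),
    (∀ S ∈ L, IsSubuniverse ops S ∧ S.Nonempty ∧ S ≠ Set.univ) ∧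
    L.Chain' (fun S T => (S ∩ T).Nonempty) ∧
    ∃ h : L ≠ [], a ∈ L.head h ∧ b ∈ L.getLast h


def Term.subst {n m : ℕ} : Term ι ar n → (Fin n → Term ι ar m) → Term ι ar m
  | .var j, σ => σ j
  | .app i ts, σ => .app i (fun k => (ts k).subst σ)

theorem Term.eval_subst (ops : ∀ i : ι, (Fin (ar i) → A) → A) {n m : ℕ}
    (t : Term ι ar n) (σ : Fin n → Term ι ar m) (x : Fin m → A) :
    (t.subst σ).eval ops x = t.eval ops (fun j => (σ j).eval ops x) := by
  induction t with
  | var j => rfl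
  | app i ts ih => simp only [Term.subst, Term.eval, ih]

theorem Term.eval_const {ops : ∀ i : ι, (Fin (ar i) → A) → A}
    (hidem : Idempotent ops) {n : ℕ} (t : Term ι ar n) (x : A) :
    t.eval ops (fun _ => x) = x := by
  induction t with
  | var j => rfl
  | app i ts ih => simp only [Term.eval, ih]; exact hidem i x

namespace IsTermOp3

variable {ops : ∀ i : ι, (Fin (ar i) → A) → A}

theorem comp {g g₁ g₂ g₃ : A → A → A → A} (hg : IsTermOp3 ops g) (h₁ : IsTermOp3 ops g₁)
    (h₂ : IsTermOp3 ops g₂) (h₃ : IsTermOp3 ops g₃) :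
    IsTermOp3 ops (fun x y z => g (g₁ x y z) (g₂ x y z) (g₃ x y z)) := by
  obtain ⟨t, ht⟩ := hg
  obtain ⟨t₁, ht₁⟩ := h₁
  obtain ⟨t₂, ht₂⟩ := h₂
  obtain ⟨t₃, ht₃⟩ := h₃
  refine ⟨t.subst ![t₁, t₂, t₃], fun x y z => ?_⟩
  show g _ _ _ = _
  rw [Term.eval_subst, ht]
  congr 1
  funext j
  fin_cases j <;> simp [ht₁, ht₂, ht₃]

theorem proj₁ : IsTermOp3 ops (fun x _ _ => x) := ⟨.var 0, fun _ _ _ => rfl⟩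

theorem proj₂ : IsTermOp3 ops (fun _ y _ => y) := ⟨.var 1, fun _ _ _ => rfl⟩

theorem proj₃ : IsTermOp3 ops (fun _ _ z => z) := ⟨.var 2, fun _ _ _ => rfl⟩

theorem iterate {g : A → A → A → A} (hg : IsTermOp3 ops g) (m : ℕ) :
    IsTermOp3 ops (fun x y z => (g x y)^[m] z) := by
  induction m with
  | zero => exact proj₃
  | succ m ih =>
    simp only [Function.iterate_succ_apply']
    exact hg.comp proj₁ proj₂ ih

theorem apply_self (hidem : Idempotent ops) {g : A → A → A → A} (hg : IsTermOp3 ops g)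
    (x : A) : g x x x = x := by
  obtain ⟨t, ht⟩ := hg
  rw [ht]
  convert Term.eval_const hidem t x using 2
  funext j
  fin_cases j <;> rfl

end IsTermOp3

theorem Sg.subset (ops : ∀ i : ι, (Fin (ar i) → A) → A) (X : Set A) : X ⊆ Sg ops X :=
  fun _ hx _ hS => hS.2 hx

theorem IsCongruenceOn.rel_iterate {ops : ∀ i : ι, (Fin (ar i) → A) → A} {B : Set A}
    {θ : A → A → Prop} (hθ : IsCongruenceOn ops B θ) {f : A → A} (hf : ∀ x ∈ B, θ x (f x))
    {x : A} (hx : x ∈ B) (n : ℕ) : θ x (f^[n] x) := by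
  obtain ⟨hdom, hrefl, -, htrans, -⟩ := hθ
  induction n with
  | zero => exact hrefl x hx
  | succ n ih =>
    rw [Function.iterate_succ_apply']
    exact htrans _ _ _ ih (hf _ (hdom _ _ ih).2)

theorem Function.exists_isPeriodicPt_iterate_succ {α : Type*} [Finite α] (f : α → α) (x : α) :
    ∃ n p : ℕ, Function.IsPeriodicPt f (p + 1) (f^[n + 1] x) := by
  obtain ⟨m, k, hmk, heq⟩ := Set.finite_univ.exists_lt_map_eq_of_forall_mem
    (f := fun n => f^[n + 1] x) (fun _ => Set.mem_univ _)
  refine ⟨m, k - m - 1, ?_⟩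
  simp only [Function.IsPeriodicPt, Function.IsFixedPt, ← Function.iterate_add_apply] at heq ⊢
  rw [heq]
  congr 1
  omega

theorem stmt_15_general {ι : Type} {ar : ι → ℕ} {A : Type} [Fintype A]
    (ops : ∀ i : ι, (Fin (ar i) → A) → A)
    (hidem : Idempotent ops)
    (a b : A) (θ : A → A → Prop)
    (hθ : IsCongruenceOn ops (Sg ops ({a, b} : Set A)) θ)
    (h : A → A → A → A) (hh : IsTermOp3 ops h)
    (hlaw : ∀ x y : A, h (h x y y) y y = h x y y)
    (haff : ∀ x ∈ Sg ops ({a, b} : Set A), ∀ y ∈ Sg ops ({a, b} : Set A),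
      θ (h x y y) x ∧ θ (h y y x) x) :
    ∃ b', θ b b' ∧ ∃ h' : A → A → A → A, IsTermOp3 ops h' ∧
      h' b' a a = b' ∧ h' a a b' = b' := by
  have haB : a ∈ Sg ops {a, b} := Sg.subset ops _ (by simp)
  have hbB : b ∈ Sg ops {a, b} := Sg.subset ops _ (by simp)
  set φ : A → A := fun z => h (h a a z) a a
  have hφ : ∀ z ∈ Sg ops {a, b}, θ z (φ z) := fun z hz => by
    have h₁ : θ (h a a z) z := (haff z hz a haB).2
    have h₂ : θ (φ z) (h a a z) := (haff _ (hθ.1 _ _ h₁).1 a haB).1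
    exact hθ.2.2.1 _ _ (hθ.2.2.2.1 _ _ _ h₂ h₁)
  obtain ⟨n, p, hper⟩ := Function.exists_isPeriodicPt_iterate_succ φ b
  have hfix : h (φ^[n + 1] b) a a = φ^[n + 1] b := by
    rw [Function.iterate_succ_apply']
    exact hlaw _ a
  have hφa : φ a = a := by simp only [φ, hh.apply_self hidem]
  refine ⟨φ^[n + 1] b, hθ.rel_iterate hφ hbB (n + 1),
    fun x y z => h (h x y ((fun w => h (h y y w) y y)^[p] z)) y y, ?_, ?_, ?_⟩
  · have hψ : IsTermOp3 ops fun _ y z => (fun w => h (h y y w) y y)^[p] z :=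
      (hh.comp (hh.comp .proj₂ .proj₂ .proj₃) .proj₂ .proj₂).iterate p
    exact hh.comp (hh.comp .proj₁ .proj₂ hψ) .proj₂ .proj₂
  · show h (h _ a (φ^[p] a)) a a = _
    rw [Function.iterate_fixed hφa, hlaw, hfix]
  · show φ (φ^[p] _) = _
    rw [← Function.iterate_succ_apply' φ]
    exact hper

/-- an affine edge yields a thin affine edge: there are
`b' ∈ b^θ` and a ternary term operation `h'` with `h'(b',a,a) = h'(a,a,b') = b'`. -/
theorem stmt_15 {ι : Type} {ar : ι → ℕ} {A : Type} [Fintype A] [Nonempty A]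
    (ops : ∀ i : ι, (Fin (ar i) → A) → A)
    (hidem : Idempotent ops)
    (a b : A) (θ : A → A → Prop)
    (hθ : IsCongruenceOn ops (Sg ops ({a, b} : Set A)) θ)
    (h : A → A → A → A) (hh : IsTermOp3 ops h)
    (hlaw : ∀ x y : A, h (h x y y) y y = h x y y)
    (haff : ∀ x ∈ Sg ops ({a, b} : Set A), ∀ y ∈ Sg ops ({a, b} : Set A),
      θ (h x y y) x ∧ θ (h y y x) x) :
    ∃ b', θ b b' ∧ ∃ h' : A → A → A → A, IsTermOp3 ops h' ∧
      h' b' a a = b' ∧ h' a a b' = b' :=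
  stmt_15_general ops hidem a b θ hθ h hh hlaw haff

end UA
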